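/- For every family of integers t = (t_{i,j,k})_{1 ≤ i < j < k ≤ n}, define subgroups G_i(t) = ⟨a_i, a_{i+1}, …, a_n⟩ ≤ G(t) for 1 ≤ i ≤ n and G_{n+1}(t) = {1}. Then for each 1 ≤ i ≤ n the commutator subgroup ⁅G(t), G_i(t)⁆ is contained in G_{i+1}(t); in particular, each G_i(t) is a normal subgroup of G(t) and G(t) = G_1(t) ≥ G_2(t) ≥ ⋯ ≥ G_{n+1}(t) = {1} is a central series of G(t). -/

import Mathlib

namespace HallPoly

/-- The ordered product `g_1^{e_1} ⋯ g_n^{e_n}` taken in increasing order of indices. -/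
def prodPow {Γ : Type*} [Group Γ] (n : ℕ) (g : Fin n → Γ) (e : Fin n → ℤ) : Γ :=
  ((List.finRange n).map fun k => g k ^ e k).prod

/-- The relators of the presented group `G(t)`:
`(a_i · a_j · a_{j+1}^{t_{i,j,j+1}} ⋯ a_n^{t_{i,j,n}})⁻¹ · (a_j · a_i)` for `1 ≤ i < j ≤ n`. -/
def rels (n : ℕ) (t : Fin n → Fin n → Fin n → ℤ) : Set (FreeGroup (Fin n)) :=
  { r | ∃ i j : Fin n, i < j ∧
      r = (FreeGroup.of i * FreeGroup.of j *
            prodPow n FreeGroup.of (fun k => if j < k then t i j k else 0))⁻¹ *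
          (FreeGroup.of j * FreeGroup.of i) }

/-- The presented group `G(t)` with generators `a_1, …, a_n` and relations
`a_j·a_i = a_i·a_j·a_{j+1}^{t_{i,j,j+1}} ⋯ a_n^{t_{i,j,n}}` for `1 ≤ i < j ≤ n`. -/
abbrev G (n : ℕ) (t : Fin n → Fin n → Fin n → ℤ) : Type := PresentedGroup (rels n t)

/-- The generators `a_1, …, a_n` of `G(t)`. -/
def a (n : ℕ) (t : Fin n → Fin n → Fin n → ℤ) (i : Fin n) : G n t :=
  PresentedGroup.of i

/-- The normal form map `N_t : ℤⁿ → G(t)`, `x ↦ a_1^{x_1} ⋯ a_n^{x_n}`. -/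
def N (n : ℕ) (t : Fin n → Fin n → Fin n → ℤ) (x : Fin n → ℤ) : G n t :=
  prodPow n (a n t) x

/-- The subgroup `G_{i+1}(t) = ⟨a_{i+1}, …, a_n⟩ ≤ G(t)` (0-based: `Gsub n t i` is generated
by the generators `a_j` with `i ≤ j` in 0-based indexing, so `Gsub n t 0 = G_1(t)` and
`Gsub n t n = G_{n+1}(t) = {1}`). -/
def Gsub (n : ℕ) (t : Fin n → Fin n → Fin n → ℤ) (i : ℕ) : Subgroup (G n t) :=
  Subgroup.closure { x | ∃ j : Fin n, i ≤ (j : ℕ) ∧ x = a n t j }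

/-!
Downward induction on `i`, starting from `G_{n+1} = 1`. If `G_{i+1}` is normal, the inclusion
`⁅G, G_i⁆ ≤ G_{i+1}` only has to be checked on commutators `⁅a_p, a_j⁆` of generators with
`j ≥ i`; the defining relation for the pair `p, j` makes such a commutator a conjugate of a word
in `a_{k+1}, …, a_n` (or of its inverse) with `k = max p j`, hence an element of `G_{i+1}`.
In turn `⁅G, G_i⁆ ≤ G_{i+1} ≤ G_i` makes `G_i` normal, which feeds the next step.
-/

end HallPoly

open scoped commutatorElement

namespace Subgroup

theorem commutator_closure_le_of_forall_mem {Γ : Type*} [Group Γ] {S T : Set Γ}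
    {H : Subgroup Γ} [H.Normal] (h : ∀ s ∈ S, ∀ t ∈ T, ⁅s, t⁆ ∈ H) :
    ⁅closure S, closure T⁆ ≤ H := by
  rw [← QuotientGroup.ker_mk' H, ← map_eq_bot_iff, map_commutator, MonoidHom.map_closure,
    MonoidHom.map_closure, commutator_eq_bot_iff_le_centralizer, centralizer_closure, closure_le]
  rintro _ ⟨s, hs, rfl⟩
  rw [SetLike.mem_coe, mem_centralizer_iff_commutator_eq_one']
  rintro _ ⟨t, ht, rfl⟩
  rw [← map_commutatorElement, ← MonoidHom.mem_ker, QuotientGroup.ker_mk']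
  exact h s hs t ht

end Subgroup

namespace HallPoly

theorem map_prodPow {Γ Δ : Type*} [Group Γ] [Group Δ] (f : Γ →* Δ) (n : ℕ)
    (g : Fin n → Γ) (e : Fin n → ℤ) :
    f (prodPow n g e) = prodPow n (fun k => f (g k)) e := by
  simp [prodPow, map_list_prod, Function.comp_def]

theorem prodPow_mem {Γ : Type*} [Group Γ] {H : Subgroup Γ} {n : ℕ} {g : Fin n → Γ}
    {e : Fin n → ℤ} (h : ∀ k, g k ^ e k ∈ H) : prodPow n g e ∈ H :=
  Subgroup.list_prod_mem _ <| by
    simp only [List.mem_map, List.mem_finRange, true_and, forall_exists_index]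
    rintro _ k rfl
    exact h k

section

variable {n : ℕ} {t : Fin n → Fin n → Fin n → ℤ}

theorem a_mul_a_of_lt {i j : Fin n} (hij : i < j) :
    a n t j * a n t i = a n t i * a n t j * N n t (fun k => if j < k then t i j k else 0) := by
  refine (PresentedGroup.mk_eq_mk_of_inv_mul_mem (rels := rels n t) ⟨i, j, hij, rfl⟩).symm.trans ?_
  simp only [map_mul, map_prodPow, N]
  rfl

theorem a_mem_Gsub {m : ℕ} {j : Fin n} (h : m ≤ j) : a n t j ∈ Gsub n t m :=
  Subgroup.subset_closure ⟨j, h, rfl⟩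

theorem Gsub_antitone : Antitone (Gsub n t) := fun _ _ hm =>
  Subgroup.closure_mono fun _ ⟨j, hj, hx⟩ => ⟨j, hm.trans hj, hx⟩

theorem Gsub_zero : Gsub n t 0 = ⊤ := by
  rw [Gsub, ← PresentedGroup.closure_range_of (rels n t)]
  congr
  ext
  simp [a, eq_comm]

theorem Gsub_eq_bot {m : ℕ} (h : n ≤ m) : Gsub n t m = ⊥ := by
  rw [Gsub, Subgroup.closure_eq_bot_iff]
  rintro _ ⟨j, hj, -⟩
  omega

theorem N_mem_Gsub {m : ℕ} {x : Fin n → ℤ} (hx : ∀ k : Fin n, (k : ℕ) < m → x k = 0) :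
    N n t x ∈ Gsub n t m := by
  refine prodPow_mem fun k => ?_
  rcases lt_or_ge (k : ℕ) m with hk | hk
  · simp [hx k hk]
  · exact Subgroup.zpow_mem _ (a_mem_Gsub hk) _

theorem commutatorElement_a_a_mem {m : ℕ} [(Gsub n t m).Normal] {i j : Fin n} (hij : i < j)
    (hm : m ≤ j + 1) : ⁅a n t j, a n t i⁆ ∈ Gsub n t m := by
  have hN : N n t (fun k => if j < k then t i j k else 0) ∈ Gsub n t m :=
    N_mem_Gsub fun k hk => if_neg (by omega)
  have hconj : ⁅a n t j, a n t i⁆ =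
      (a n t i * a n t j) * N n t (fun k => if j < k then t i j k else 0) *
        (a n t i * a n t j)⁻¹ := by
    rw [commutatorElement_def, a_mul_a_of_lt hij]
    group
  rw [hconj]
  exact Subgroup.Normal.conj_mem ‹_› _ hN _

theorem Gsub_normal_of_commutator_le {m : ℕ}
    (h : ⁅(⊤ : Subgroup (G n t)), Gsub n t m⁆ ≤ Gsub n t (m + 1)) : (Gsub n t m).Normal :=
  Subgroup.commutator_top_left_le_iff.mp (h.trans (Gsub_antitone (Nat.le_succ m)))

theorem commutator_top_Gsub_le_of_normal (m : ℕ) [(Gsub n t (m + 1)).Normal] :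
    ⁅(⊤ : Subgroup (G n t)), Gsub n t m⁆ ≤ Gsub n t (m + 1) := by
  rw [← Gsub_zero]
  refine Subgroup.commutator_closure_le_of_forall_mem ?_
  rintro _ ⟨i, -, rfl⟩ _ ⟨j, hj, rfl⟩
  rcases lt_trichotomy i j with hij | rfl | hji
  · rw [← commutatorElement_inv]
    exact inv_mem (commutatorElement_a_a_mem hij (by omega))
  · simp
  · exact commutatorElement_a_a_mem hji (by omega)

theorem commutator_top_Gsub_le (m : ℕ) :
    ⁅(⊤ : Subgroup (G n t)), Gsub n t m⁆ ≤ Gsub n t (m + 1) := by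
  by_cases hm : n ≤ m
  · simp [Gsub_eq_bot hm]
  · have := Gsub_normal_of_commutator_le (commutator_top_Gsub_le (m + 1))
    exact commutator_top_Gsub_le_of_normal m
termination_by n - m

end

/-- The chain `G(t) = G_1(t) ≥ G_2(t) ≥ ⋯ ≥ G_{n+1}(t) = {1}` of subgroups
`G_i(t) = ⟨a_i, …, a_n⟩` is a central series of `G(t)`: each `⁅G(t), G_i(t)⁆` is contained
in `G_{i+1}(t)`; in particular each `G_i(t)` is normal in `G(t)`. -/
theorem Gsub_central_series (n : ℕ) (t : Fin n → Fin n → Fin n → ℤ) :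
    Gsub n t 0 = ⊤ ∧ Gsub n t n = ⊥ ∧
    (∀ i : ℕ, i < n → Gsub n t (i + 1) ≤ Gsub n t i) ∧
    (∀ i : ℕ, (Gsub n t i).Normal) ∧
    (∀ i : ℕ, i < n → ⁅(⊤ : Subgroup (G n t)), Gsub n t i⁆ ≤ Gsub n t (i + 1)) := by
  exact ⟨Gsub_zero, Gsub_eq_bot le_rfl, fun m _ => Gsub_antitone (Nat.le_succ m),
    fun m => Gsub_normal_of_commutator_le (commutator_top_Gsub_le m),
    fun m _ => commutator_top_Gsub_le m⟩

end HallPoly
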